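/- Let f : ℝⁿ → ℝ be a polynomial all of whose monomials x₁^{α₁}⋯xₙ^{αₙ} have weighted degree α₁w₁ + ⋯ + αₙwₙ ≥ d with respect to positive integer weights w₁, …, wₙ. Then there exist a constant C > 0 and a neighborhood U of the origin such that for all x ∈ U, (Σ_{i=1}^n ρ(x)^{2wᵢ} |∂f/∂xᵢ(x)|²)^{1/2} ≤ C · ρ(x)^d, where ρ(x) = (Σ_{i=1}^n |xᵢ|^{2/wᵢ})^{1/2}. -/

import Mathlib

open MvPolynomial

/-- Euclidean norm of the gradient of a polynomial `f` at `x`. -/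
noncomputable def gradNorm {n : ℕ} (f : MvPolynomial (Fin n) ℝ) (x : Fin n → ℝ) : ℝ :=
  Real.sqrt (∑ i, (eval x (pderiv i f)) ^ 2)

/-- Euclidean norm on `Fin n → ℝ`. -/
noncomputable def eNorm {n : ℕ} (x : Fin n → ℝ) : ℝ :=
  Real.sqrt (∑ i, (x i) ^ 2)

/-- `f` is weighted homogeneous of type `(d; w)`: every monomial `x^α` appearing in `f`
satisfies `∑ i, α i * w i = d`. -/
def IsWeightedHomog {n : ℕ} (f : MvPolynomial (Fin n) ℝ) (w : Fin n → ℕ) (d : ℕ) : Prop :=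
  ∀ α ∈ f.support, ∑ i, α i * w i = d

/-- `f` is non-degenerate (isolated singularity at the origin): in some neighborhood of `0`
the gradient of `f` vanishes only at the origin. -/
def Nondeg {n : ℕ} (f : MvPolynomial (Fin n) ℝ) : Prop :=
  ∃ U ∈ nhds (0 : Fin n → ℝ), ∀ x ∈ U, (∀ i, eval x (pderiv i f) = 0) → x = 0

/-- The Łojasiewicz inequality `‖∇f(x)‖ ≥ C ‖x‖^lam` holds near `0` for some `C > 0`. -/
def LojIneq {n : ℕ} (f : MvPolynomial (Fin n) ℝ) (lam : ℝ) : Prop :=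
  ∃ C > (0 : ℝ), ∃ U ∈ nhds (0 : Fin n → ℝ), ∀ x ∈ U, C * eNorm x ^ lam ≤ gradNorm f x

/-- The Łojasiewicz exponent of `f`: the infimum of all `lam > 0` for which the
Łojasiewicz inequality holds near the origin. -/
noncomputable def lojExp {n : ℕ} (f : MvPolynomial (Fin n) ℝ) : ℝ :=
  sInf {lam : ℝ | 0 < lam ∧ LojIneq f lam}

/-- The weighted "radius" `ρ(x) = (∑ i |x i| ^ (2 / w i)) ^ (1/2)`. -/
noncomputable def rho {n : ℕ} (w : Fin n → ℕ) (x : Fin n → ℝ) : ℝ :=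
  Real.sqrt (∑ i, |x i| ^ ((2 : ℝ) / (w i : ℝ)))

/-- The weighted norm of the gradient:
`‖grad_w f(x)‖_w = (∑ i ρ(x)^(2 wᵢ) |∂f/∂xᵢ(x)|²)^(1/2)`. -/
noncomputable def wGradNorm {n : ℕ} (w : Fin n → ℕ) (f : MvPolynomial (Fin n) ℝ)
    (x : Fin n → ℝ) : ℝ :=
  Real.sqrt (∑ i, rho w x ^ (2 * w i) * (eval x (pderiv i f)) ^ 2)


/-!
Since `|xᵢ| ≤ ρ(x)^{wᵢ}`, a monomial of weighted degree `e` is bounded by `ρ(x)^e`. Every monomial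
of `∂f/∂xᵢ` has weighted degree at least `d - wᵢ`, so near the origin, where `ρ ≤ 1`, each term
`ρ(x)^{wᵢ} |∂f/∂xᵢ(x)|` is `O(ρ(x)^d)`; the Euclidean norm of these terms is at most their sum.
-/

open Finset Filter Topology

namespace WeightedRadius

variable {n : ℕ} {w : Fin n → ℕ}

lemma rho_nonneg (x : Fin n → ℝ) : 0 ≤ rho w x := Real.sqrt_nonneg _

lemma continuous_rho : Continuous (rho w) := by
  refine Real.continuous_sqrt.comp (continuous_finsetSum _ fun i _ => ?_)
  exact (Real.continuous_rpow_const (by positivity)).comp (continuous_apply i).abs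

lemma rho_zero (hw : ∀ i, 0 < w i) : rho w 0 = 0 := by
  have hpos : ∀ i, (2 : ℝ) / w i ≠ 0 := fun i => by have := hw i; positivity
  simp [rho, Real.zero_rpow (hpos _)]

lemma eventually_rho_le_one (hw : ∀ i, 0 < w i) : ∀ᶠ x in 𝓝 (0 : Fin n → ℝ), rho w x ≤ 1 := by
  have h := (continuous_rho (w := w)).tendsto (0 : Fin n → ℝ)
  rw [rho_zero hw] at h
  exact h.eventually (eventually_le_nhds zero_lt_one)

lemma abs_le_rho_pow {i : Fin n} (hwi : 0 < w i) (x : Fin n → ℝ) : |x i| ≤ rho w x ^ w i := by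
  set S := ∑ j, |x j| ^ ((2 : ℝ) / w j)
  have hS : 0 ≤ S := sum_nonneg fun j _ => by positivity
  have hxi : |x i| ^ ((2 : ℝ) / w i) ≤ S :=
    single_le_sum (f := fun j => |x j| ^ ((2 : ℝ) / w j)) (fun j _ => by positivity) (mem_univ i)
  have hwi' : (w i : ℝ) ≠ 0 := by positivity
  calc |x i| = (|x i| ^ ((2 : ℝ) / w i)) ^ ((w i : ℝ) / 2) := by
        rw [← Real.rpow_mul (abs_nonneg _), show (2 : ℝ) / w i * (w i / 2) = 1 by field_simp,
          Real.rpow_one]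
    _ ≤ S ^ ((w i : ℝ) / 2) := by gcongr
    _ = rho w x ^ w i := by
        rw [rho, Real.sqrt_eq_rpow, ← Real.rpow_natCast, ← Real.rpow_mul hS]
        ring_nf

lemma abs_prod_pow_le_rho_pow_weight (hw : ∀ i, 0 < w i) (x : Fin n → ℝ) (β : Fin n →₀ ℕ) :
    |∏ i, x i ^ β i| ≤ rho w x ^ Finsupp.weight w β := by
  rw [Finsupp.weight_eq_sum, ← prod_pow_eq_pow_sum, abs_prod]
  gcongr with i
  rw [abs_pow, smul_eq_mul, mul_comm, pow_mul]
  gcongr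
  exact abs_le_rho_pow (hw i) x

lemma abs_eval_le_of_le_weight (hw : ∀ i, 0 < w i) {g : MvPolynomial (Fin n) ℝ} {e : ℕ}
    (hg : ∀ β ∈ g.support, e ≤ Finsupp.weight w β) {x : Fin n → ℝ} (hx : rho w x ≤ 1) :
    |eval x g| ≤ (∑ β ∈ g.support, |coeff β g|) * rho w x ^ e := by
  have hρ := rho_nonneg (w := w) x
  rw [eval_eq', sum_mul]
  refine (abs_sum_le_sum_abs _ _).trans (sum_le_sum fun β hβ => ?_)
  rw [abs_mul]
  gcongr
  exact (abs_prod_pow_le_rho_pow_weight hw x β).trans (pow_le_pow_of_le_one hρ hx (hg β hβ))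

lemma le_weight_add_of_mem_support_pderiv {f : MvPolynomial (Fin n) ℝ} {d : ℕ}
    (hf : ∀ α ∈ f.support, d ≤ Finsupp.weight w α) {i : Fin n} {β : Fin n →₀ ℕ}
    (hβ : β ∈ (pderiv i f).support) : d ≤ w i + Finsupp.weight w β := by
  rw [mem_support_iff, coeff_pderiv] at hβ
  have h := hf _ (mem_support_iff.mpr (left_ne_zero_of_mul hβ))
  rwa [map_add, Finsupp.weight_single, one_smul, add_comm] at h

lemma rho_pow_mul_abs_eval_pderiv_le (hw : ∀ i, 0 < w i) {f : MvPolynomial (Fin n) ℝ} {d : ℕ}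
    (hf : ∀ α ∈ f.support, d ≤ Finsupp.weight w α) (i : Fin n) {x : Fin n → ℝ}
    (hx : rho w x ≤ 1) :
    rho w x ^ w i * |eval x (pderiv i f)| ≤
      (∑ β ∈ (pderiv i f).support, |coeff β (pderiv i f)|) * rho w x ^ d := by
  have hρ := rho_nonneg (w := w) x
  have hderiv := abs_eval_le_of_le_weight hw (e := d - w i) (g := pderiv i f)
    (fun β hβ => by have := le_weight_add_of_mem_support_pderiv hf hβ; omega) hx
  calc rho w x ^ w i * |eval x (pderiv i f)|
      ≤ rho w x ^ w i * ((∑ β ∈ (pderiv i f).support, |coeff β (pderiv i f)|) *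
          rho w x ^ (d - w i)) := by gcongr
    _ = (∑ β ∈ (pderiv i f).support, |coeff β (pderiv i f)|) * rho w x ^ (w i + (d - w i)) := by
        ring
    _ ≤ _ := mul_le_mul_of_nonneg_left (pow_le_pow_of_le_one hρ hx le_add_tsub) (by positivity)

lemma wGradNorm_le_sum (f : MvPolynomial (Fin n) ℝ) (x : Fin n → ℝ) :
    wGradNorm w f x ≤ ∑ i, rho w x ^ w i * |eval x (pderiv i f)| := by
  have hρ := rho_nonneg (w := w) x
  rw [wGradNorm, Real.sqrt_le_left (by positivity)]
  calc ∑ i, rho w x ^ (2 * w i) * eval x (pderiv i f) ^ 2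
      = ∑ i, (rho w x ^ w i * |eval x (pderiv i f)|) ^ 2 := by
        simp only [mul_pow, ← pow_mul, sq_abs, mul_comm (w _) 2]
    _ ≤ _ := sum_sq_le_sq_sum_of_nonneg fun i _ => by positivity

end WeightedRadius

open WeightedRadius in
theorem stmt4 (n d : ℕ) (w : Fin n → ℕ) (hw : ∀ i, 0 < w i)
    (f : MvPolynomial (Fin n) ℝ)
    (hdeg : ∀ α ∈ f.support, d ≤ ∑ i, α i * w i) :
    ∃ C > (0 : ℝ), ∃ U ∈ nhds (0 : Fin n → ℝ), ∀ x ∈ U,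
      wGradNorm w f x ≤ C * rho w x ^ d := by
  have hf : ∀ α ∈ f.support, d ≤ Finsupp.weight w α := by
    simpa only [Finsupp.weight_eq_sum, smul_eq_mul] using hdeg
  set K := ∑ i, ∑ β ∈ (pderiv i f).support, |coeff β (pderiv i f)|
  refine ⟨K + 1, by positivity, _, eventually_rho_le_one hw, fun x hx => ?_⟩
  calc wGradNorm w f x ≤ ∑ i, rho w x ^ w i * |eval x (pderiv i f)| := wGradNorm_le_sum f x
    _ ≤ K * rho w x ^ d := by
        rw [sum_mul]
        exact sum_le_sum fun i _ => rho_pow_mul_abs_eval_pderiv_le hw hf i hx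
    _ ≤ (K + 1) * rho w x ^ d := by
        have := rho_nonneg (w := w) x
        gcongr
        linarith
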